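/- Let a > 0 and let p₁, p₂, p₃ be real numbers; set c = (p₁ + p₂ + p₃)/3 and p₀ = (4/9)(p₁² + p₂² + p₃²) - (1/9)(p₁ + p₂ + p₃)². On a probability space, let X be a real random variable with finite second moment and E[X] = c, and let A₁, A₂, A₃, C₁, C₂, C₃ be real random variables such that the seven random variables X, A₁, A₂, A₃, C₁, C₂, C₃ are mutually independent, each A_k is uniformly distributed on [-a, a], and each C_k is uniformly distributed on [0, 2]. Set Y = (1/3)·Σ_{k=1}^{3} (p_k + A_k·|C_k·p_k - X|). Then Y has finite second moment and Var(Y) = (a²/9)·(Var(X) + p₀). -/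

import Mathlib

/-!
Write the update as `Y = c + (Z₁ + Z₂ + Z₃) / 3` with `Z_k = A_k |C_k p_k - X|`. Each factor
`A_k` is centred and independent of the rest of its own term and of the other terms, so the
`Z_k` are pairwise uncorrelated and
`Var Z_k = E[A_k²] E[(C_k p_k - X)²] = (a² / 3)((4/3) p_k² - 2 p_k c + E[X²])`.
Summing and using `E[X²] = Var X + c²` gives the recursion.
-/

open MeasureTheory ProbabilityTheory Set

namespace MeasureTheory.pdf.IsUniform

variable {Ω : Type*} [MeasurableSpace Ω] {P : Measure Ω}

lemma ae_mem {E : Type*} [MeasurableSpace E] {μ : Measure E} {X : Ω → E} {s : Set E}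
    (hms : MeasurableSet s) (hns : μ s ≠ 0) (hnt : μ s ≠ ⊤) (hu : IsUniform X s P μ) :
    ∀ᵐ ω ∂P, X ω ∈ s := by
  show P (X ⁻¹' s)ᶜ = 0
  simpa using hu.measure_preimage hns hnt hms.compl

variable {V : Ω → ℝ} {l u : ℝ}

lemma integral_comp_Icc (hlu : l < u) (hV : IsUniform V (Icc l u) P) {g : ℝ → ℝ}
    (hg : Measurable g) : ∫ ω, g (V ω) ∂P = (u - l)⁻¹ * ∫ x in l..u, g x := by
  have hvol : volume (Icc l u) = ENNReal.ofReal (u - l) := Real.volume_Icc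
  rw [← integral_map (hV.aemeasurable (by simp [hvol, hlu]) (by simp [hvol]))
    hg.aestronglyMeasurable, hV, ProbabilityTheory.cond, integral_smul_measure, hvol,
    ENNReal.toReal_inv, ENNReal.toReal_ofReal (by linarith),
    intervalIntegral.integral_of_le hlu.le, integral_Icc_eq_integral_Ioc, smul_eq_mul]

lemma integral_Icc (hlu : l < u) (hV : IsUniform V (Icc l u) P) :
    ∫ ω, V ω ∂P = (l + u) / 2 := by
  rw [hV.integral_comp_Icc hlu (g := fun x => x) measurable_id, integral_id]
  field_simp [(sub_pos.2 hlu).ne']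
  ring

lemma integral_Icc_neg_eq_zero {a : ℝ} (ha : 0 < a) (hV : IsUniform V (Icc (-a) a) P) :
    ∫ ω, V ω ∂P = 0 := by
  rw [hV.integral_Icc (by linarith)]
  ring

lemma integral_sq_Icc (hlu : l < u) (hV : IsUniform V (Icc l u) P) :
    ∫ ω, V ω ^ 2 ∂P = (l ^ 2 + l * u + u ^ 2) / 3 := by
  rw [hV.integral_comp_Icc hlu (g := fun x => x ^ 2) (measurable_id.pow_const 2), integral_pow]
  field_simp [(sub_pos.2 hlu).ne']
  ring

lemma memLp_Icc (hlu : l < u) (hV : IsUniform V (Icc l u) P) (p : ENNReal) : MemLp V p P := by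
  have hvol : volume (Icc l u) = ENNReal.ofReal (u - l) := Real.volume_Icc
  have hns : volume (Icc l u) ≠ 0 := by simp [hvol, hlu]
  have hnt : volume (Icc l u) ≠ ⊤ := by simp [hvol]
  have := hV.isProbabilityMeasure hns hnt
  refine MemLp.of_bound (hV.aemeasurable hns hnt).aestronglyMeasurable (max |l| |u|) ?_
  filter_upwards [hV.ae_mem measurableSet_Icc hns hnt] with ω hω
  exact abs_le_max_abs_abs hω.1 hω.2

end MeasureTheory.pdf.IsUniform

namespace ProbabilityTheory

variable {Ω : Type*} [MeasurableSpace Ω] {P : Measure Ω}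

lemma iIndepFun.precomp_of_eq {ι κ : Type*} {f : ι → Ω → ℝ} {g : κ → Ω → ℝ}
    (h : iIndepFun f P) (e : κ → ι) (he : e.Injective) (hg : ∀ k, g k = f (e k)) :
    iIndepFun g P := by
  rw [funext hg]
  exact h.precomp he

lemma IndepFun.variance_mul_of_integral_eq_zero {A B : Ω → ℝ} (h : IndepFun A B P)
    (hA : AEStronglyMeasurable A P) (hB : AEStronglyMeasurable B P) (hA0 : P[A] = 0) :
    Var[fun ω => A ω * B ω; P] = P[A ^ 2] * P[B ^ 2] := by
  have hAB0 : P[fun ω => A ω * B ω] = 0 := by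
    rw [h.integral_fun_mul_eq_mul_integral hA hB, hA0, zero_mul]
  have hsq : IndepFun (fun ω => A ω ^ 2) (fun ω => B ω ^ 2) P :=
    h.comp (φ := fun x => x ^ 2) (ψ := fun x => x ^ 2) (by fun_prop) (by fun_prop)
  rw [variance_of_integral_eq_zero (X := fun ω => A ω * B ω) (hA.mul hB).aemeasurable hAB0]
  simp_rw [mul_pow]
  exact hsq.integral_fun_mul_eq_mul_integral (hA.pow 2) (hB.pow 2)

lemma IndepFun.covariance_mul_eq_zero [IsProbabilityMeasure P] {A B Y : Ω → ℝ}
    (h : IndepFun A (fun ω => (B ω, Y ω)) P) (hA : AEStronglyMeasurable A P)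
    (hB : AEStronglyMeasurable B P) (hAB : MemLp (fun ω => A ω * B ω) 2 P) (hY : MemLp Y 2 P)
    (hA0 : P[A] = 0) : cov[fun ω => A ω * B ω, Y; P] = 0 := by
  have hAB0 : P[fun ω => A ω * B ω] = 0 := by
    have hAB : IndepFun A B P := h.comp measurable_id measurable_fst
    rw [hAB.integral_fun_mul_eq_mul_integral hA hB, hA0, zero_mul]
  have hABY0 : P[fun ω => A ω * (B ω * Y ω)] = 0 := by
    have hABY : IndepFun A (fun ω => B ω * Y ω) P :=
      h.comp measurable_id (measurable_fst.mul measurable_snd)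
    rw [hABY.integral_fun_mul_eq_mul_integral hA (hB.mul hY.1), hA0, zero_mul]
  rw [covariance_eq_sub hAB hY, hAB0, zero_mul, sub_zero, ← hABY0]
  simp_rw [Pi.mul_apply, mul_assoc]

lemma variance_add_add_of_covariance_eq_zero [IsFiniteMeasure P] {X Y Z : Ω → ℝ}
    (hX : MemLp X 2 P) (hY : MemLp Y 2 P) (hZ : MemLp Z 2 P)
    (hXY : cov[X, Y; P] = 0) (hXZ : cov[X, Z; P] = 0) (hYZ : cov[Y, Z; P] = 0) :
    Var[fun ω => X ω + Y ω + Z ω; P] = Var[X; P] + Var[Y; P] + Var[Z; P] := by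
  change Var[X + Y + Z; P] = _
  rw [variance_add (hX.add hY) hZ, variance_add hX hY, covariance_add_left hX hY hZ, hXY, hXZ,
    hYZ]
  ring

lemma IndepFun.integral_sub_sq [IsFiniteMeasure P] {U X : Ω → ℝ} (h : IndepFun U X P)
    (hU : MemLp U 2 P) (hX : MemLp X 2 P) :
    ∫ ω, (U ω - X ω) ^ 2 ∂P = P[U ^ 2] - 2 * (P[U] * P[X]) + P[X ^ 2] := by
  have hUX : Integrable (fun ω => U ω * X ω) P :=
    h.integrable_mul (hU.integrable one_le_two) (hX.integrable one_le_two)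
  have hexp : (fun ω => (U ω - X ω) ^ 2)
      = fun ω => U ω ^ 2 - 2 * (U ω * X ω) + X ω ^ 2 := by
    funext ω; ring
  have hU2 : Integrable (fun ω => U ω ^ 2) P := hU.integrable_sq
  have hU2UX : Integrable (fun ω => U ω ^ 2 - 2 * (U ω * X ω)) P := hU2.sub (hUX.const_mul 2)
  rw [hexp, integral_add hU2UX hX.integrable_sq, integral_sub hU2 (hUX.const_mul 2),
    integral_const_mul, h.integral_fun_mul_eq_mul_integral hU.1 hX.1]
  rfl

end ProbabilityTheory

section GWOTerm

variable {Ω : Type*} [MeasurableSpace Ω] {P : Measure Ω}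

lemma memLp_mul_abs_mul_sub [IsFiniteMeasure P] {X A C : Ω → ℝ} (hA : MemLp A ⊤ P)
    (hC : MemLp C ⊤ P) (hX : MemLp X 2 P) (p : ℝ) :
    MemLp (fun ω => A ω * |C ω * p - X ω|) 2 P :=
  (((hC.mono_exponent le_top).mul_const p).sub hX).abs.mul' hA

lemma variance_uniform_mul_abs_mul_sub [IsProbabilityMeasure P] {X A C : Ω → ℝ} {a : ℝ}
    (ha : 0 < a) (hind : iIndepFun ![X, A, C] P) (hXm : Measurable X) (hAm : Measurable A)
    (hCm : Measurable C) (hA : pdf.IsUniform A (Icc (-a) a) P)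
    (hC : pdf.IsUniform C (Icc 0 2) P) (hX : MemLp X 2 P) (p : ℝ) :
    Var[fun ω => A ω * |C ω * p - X ω|; P]
      = a ^ 2 / 3 * (4 / 3 * p ^ 2 - 2 * p * P[X] + P[X ^ 2]) := by
  have hm : ∀ i, Measurable (![X, A, C] i) := by
    intro i; fin_cases i <;> assumption
  have hAXC : IndepFun A (fun ω => (X ω, C ω)) P :=
    (hind.indepFun_prodMk hm 0 2 1 (by decide) (by decide)).symm
  have hCX : IndepFun (fun ω => C ω * p) X P :=
    (hind.indepFun (i := 2) (j := 0) (by decide)).comp (measurable_id.mul_const p) measurable_id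
  have hAB : IndepFun A (fun ω => |C ω * p - X ω|) P :=
    hAXC.comp (φ := id) (ψ := fun q : ℝ × ℝ => |q.2 * p - q.1|) measurable_id (by fun_prop)
  have hB2 : P[(fun ω => |C ω * p - X ω|) ^ 2] = 4 / 3 * p ^ 2 - 2 * p * P[X] + P[X ^ 2] := by
    simp only [Pi.pow_apply, sq_abs]
    rw [hCX.integral_sub_sq ((hC.memLp_Icc two_pos 2).mul_const p) hX]
    simp only [Pi.pow_apply, mul_pow, integral_mul_const, hC.integral_Icc two_pos,
      hC.integral_sq_Icc two_pos]
    ring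
  rw [hAB.variance_mul_of_integral_eq_zero hAm.aestronglyMeasurable (by fun_prop)
    (hA.integral_Icc_neg_eq_zero ha), hB2]
  simp only [Pi.pow_apply, hA.integral_sq_Icc (neg_lt_self ha)]
  ring

lemma covariance_mul_abs_mul_sub_eq_zero [IsProbabilityMeasure P] {X A C A' C' : Ω → ℝ}
    {p p' : ℝ} (hind : iIndepFun ![X, A, C, A', C'] P) (hXm : Measurable X) (hAm : Measurable A)
    (hCm : Measurable C) (hA'm : Measurable A') (hC'm : Measurable C') (hA0 : P[A] = 0)
    (hZ : MemLp (fun ω => A ω * |C ω * p - X ω|) 2 P)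
    (hZ' : MemLp (fun ω => A' ω * |C' ω * p' - X ω|) 2 P) :
    cov[fun ω => A ω * |C ω * p - X ω|, fun ω => A' ω * |C' ω * p' - X ω|; P] = 0 := by
  have hm : ∀ i, Measurable (![X, A, C, A', C'] i) := by
    intro i; fin_cases i <;> assumption
  have hrest : IndepFun A (fun ω => (|C ω * p - X ω|, A' ω * |C' ω * p' - X ω|)) P :=
    (hind.indepFun_finset {1} {0, 2, 3, 4} (by decide) hm).comp
      (φ := fun v : ({1} : Finset (Fin 5)) → ℝ => v ⟨1, by decide⟩)
      (ψ := fun v : ({0, 2, 3, 4} : Finset (Fin 5)) → ℝ =>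
        (|v ⟨2, by decide⟩ * p - v ⟨0, by decide⟩|,
          v ⟨3, by decide⟩ * |v ⟨4, by decide⟩ * p' - v ⟨0, by decide⟩|))
      (measurable_pi_apply _) (by fun_prop)
  exact hrest.covariance_mul_eq_zero hAm.aestronglyMeasurable (by fun_prop) hZ hZ' hA0

end GWOTerm

theorem gwo_one_step_variance
    {Ω : Type*} [MeasurableSpace Ω] (P : Measure Ω) [IsProbabilityMeasure P]
    (a : ℝ) (ha : 0 < a) (p₁ p₂ p₃ : ℝ)
    (c : ℝ) (hc : c = (p₁ + p₂ + p₃) / 3)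
    (p₀ : ℝ)
    (hp₀ : p₀ = (4/9) * (p₁^2 + p₂^2 + p₃^2) - (1/9) * (p₁ + p₂ + p₃)^2)
    (X A₁ A₂ A₃ C₁ C₂ C₃ : Ω → ℝ)
    (hXm : Measurable X)
    (hA₁m : Measurable A₁) (hA₂m : Measurable A₂) (hA₃m : Measurable A₃)
    (hC₁m : Measurable C₁) (hC₂m : Measurable C₂) (hC₃m : Measurable C₃)
    (hX2 : MemLp X 2 P) (hXmean : ∫ ω, X ω ∂P = c)
    (hA₁ : Measure.map A₁ P
      = (volume (Icc (-a) a))⁻¹ • volume.restrict (Icc (-a) a))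
    (hA₂ : Measure.map A₂ P
      = (volume (Icc (-a) a))⁻¹ • volume.restrict (Icc (-a) a))
    (hA₃ : Measure.map A₃ P
      = (volume (Icc (-a) a))⁻¹ • volume.restrict (Icc (-a) a))
    (hC₁ : Measure.map C₁ P
      = (volume (Icc (0:ℝ) 2))⁻¹ • volume.restrict (Icc (0:ℝ) 2))
    (hC₂ : Measure.map C₂ P
      = (volume (Icc (0:ℝ) 2))⁻¹ • volume.restrict (Icc (0:ℝ) 2))
    (hC₃ : Measure.map C₃ P
      = (volume (Icc (0:ℝ) 2))⁻¹ • volume.restrict (Icc (0:ℝ) 2))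
    (hindep : iIndepFun (m := fun _ : Fin 7 => (inferInstance : MeasurableSpace ℝ))
      ![X, A₁, A₂, A₃, C₁, C₂, C₃] P) :
    MemLp (fun ω => (1/3 : ℝ) *
        ((p₁ + A₁ ω * |C₁ ω * p₁ - X ω|) + (p₂ + A₂ ω * |C₂ ω * p₂ - X ω|)
          + (p₃ + A₃ ω * |C₃ ω * p₃ - X ω|))) 2 P ∧
    variance (fun ω => (1/3 : ℝ) *
        ((p₁ + A₁ ω * |C₁ ω * p₁ - X ω|) + (p₂ + A₂ ω * |C₂ ω * p₂ - X ω|)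
          + (p₃ + A₃ ω * |C₃ ω * p₃ - X ω|))) P
      = (a^2 / 9) * (variance X P + p₀) := by
  have h₁₂ : iIndepFun ![X, A₁, C₁, A₂, C₂] P :=
    hindep.precomp_of_eq ![0, 1, 4, 2, 5] (by decide) (by intro k; fin_cases k <;> rfl)
  have h₁₃ : iIndepFun ![X, A₁, C₁, A₃, C₃] P :=
    hindep.precomp_of_eq ![0, 1, 4, 3, 6] (by decide) (by intro k; fin_cases k <;> rfl)
  have h₂₃ : iIndepFun ![X, A₂, C₂, A₃, C₃] P :=
    hindep.precomp_of_eq ![0, 2, 5, 3, 6] (by decide) (by intro k; fin_cases k <;> rfl)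
  have h₁ : iIndepFun ![X, A₁, C₁] P :=
    h₁₂.precomp_of_eq ![0, 1, 2] (by decide) (by intro k; fin_cases k <;> rfl)
  have h₂ : iIndepFun ![X, A₂, C₂] P :=
    h₂₃.precomp_of_eq ![0, 1, 2] (by decide) (by intro k; fin_cases k <;> rfl)
  have h₃ : iIndepFun ![X, A₃, C₃] P :=
    h₂₃.precomp_of_eq ![0, 3, 4] (by decide) (by intro k; fin_cases k <;> rfl)
  have hZ₁ := memLp_mul_abs_mul_sub (pdf.IsUniform.memLp_Icc (neg_lt_self ha) hA₁ ⊤)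
    (pdf.IsUniform.memLp_Icc two_pos hC₁ ⊤) hX2 p₁
  have hZ₂ := memLp_mul_abs_mul_sub (pdf.IsUniform.memLp_Icc (neg_lt_self ha) hA₂ ⊤)
    (pdf.IsUniform.memLp_Icc two_pos hC₂ ⊤) hX2 p₂
  have hZ₃ := memLp_mul_abs_mul_sub (pdf.IsUniform.memLp_Icc (neg_lt_self ha) hA₃ ⊤)
    (pdf.IsUniform.memLp_Icc two_pos hC₃ ⊤) hX2 p₃
  have hW : MemLp (fun ω => A₁ ω * |C₁ ω * p₁ - X ω| + A₂ ω * |C₂ ω * p₂ - X ω|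
      + A₃ ω * |C₃ ω * p₃ - X ω|) 2 P := (hZ₁.add hZ₂).add hZ₃
  have hY : (fun ω => (1/3 : ℝ) *
        ((p₁ + A₁ ω * |C₁ ω * p₁ - X ω|) + (p₂ + A₂ ω * |C₂ ω * p₂ - X ω|)
          + (p₃ + A₃ ω * |C₃ ω * p₃ - X ω|)))
      = fun ω => c + (1/3 : ℝ) *
          (A₁ ω * |C₁ ω * p₁ - X ω| + A₂ ω * |C₂ ω * p₂ - X ω| + A₃ ω * |C₃ ω * p₃ - X ω|) := by
    funext ω; rw [hc]; ring
  refine ⟨hY ▸ (memLp_const c).add (hW.const_mul _), ?_⟩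
  rw [hY, variance_const_add (hW.const_mul _).1, variance_const_mul,
    variance_add_add_of_covariance_eq_zero hZ₁ hZ₂ hZ₃
      (covariance_mul_abs_mul_sub_eq_zero h₁₂ hXm hA₁m hC₁m hA₂m hC₂m
        (pdf.IsUniform.integral_Icc_neg_eq_zero ha hA₁) hZ₁ hZ₂)
      (covariance_mul_abs_mul_sub_eq_zero h₁₃ hXm hA₁m hC₁m hA₃m hC₃m
        (pdf.IsUniform.integral_Icc_neg_eq_zero ha hA₁) hZ₁ hZ₃)
      (covariance_mul_abs_mul_sub_eq_zero h₂₃ hXm hA₂m hC₂m hA₃m hC₃m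
        (pdf.IsUniform.integral_Icc_neg_eq_zero ha hA₂) hZ₂ hZ₃),
    variance_uniform_mul_abs_mul_sub ha h₁ hXm hA₁m hC₁m hA₁ hC₁ hX2,
    variance_uniform_mul_abs_mul_sub ha h₂ hXm hA₂m hC₂m hA₂ hC₂ hX2,
    variance_uniform_mul_abs_mul_sub ha h₃ hXm hA₃m hC₃m hA₃ hC₃ hX2,
    variance_eq_sub hX2, hXmean, hp₀, hc]
  ring
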